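/- In a COM (U, L), for any two covectors X and Y: (i) the distance between the faces F(X) and F(Y) in the tope graph equals |S(X,Y)|, the size of the separator; (ii) the metric projection of F(X) onto F(Y) is the face F(Y∘X), and the metric projection of F(Y) onto F(X) is F(X∘Y). -/

import Mathlib

open Finset
open scoped Classical

variable {U : Type*}

/-- Hamming distance between two vertices of the hypercube `U → Bool`. -/
def hDist [Fintype U] [DecidableEq U] (x y : U → Bool) : ℕ :=
  (Finset.univ.filter fun i => x i ≠ y i).card

/-- The hypercube graph on `U → Bool`: two vertices are adjacent iff they differ
in exactly one coordinate. -/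
def cubeGraph (U : Type*) [Fintype U] [DecidableEq U] : SimpleGraph (U → Bool) where
  Adj x y := hDist x y = 1
  symm := by
    refine ⟨?_⟩
    intro x y h
    have hs : (Finset.univ.filter fun i => y i ≠ x i) =
        (Finset.univ.filter fun i => x i ≠ y i) := by
      apply Finset.filter_congr
      intro i _
      exact ne_comm
    simpa [hDist, hs] using h
  loopless := by
    refine ⟨?_⟩
    intro x h
    simp [hDist] at h

/-- Distance between `x` and `y` inside the subgraph of the hypercube induced by `A`
(`0` if one of them is not in `A`). -/
noncomputable def dIn [Fintype U] [DecidableEq U] (A : Set (U → Bool)) (x y : U → Bool) : ℕ :=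
  if h : x ∈ A ∧ y ∈ A then ((cubeGraph U).induce A).dist ⟨x, h.1⟩ ⟨y, h.2⟩ else 0

/-- A set of vertices of the hypercube is a partial cube if its induced graph is connected
and the induced graph distance coincides with the Hamming distance
(i.e. it is an isometric subgraph of the hypercube). -/
def IsPartialCube [Fintype U] [DecidableEq U] (A : Set (U → Bool)) : Prop :=
  ((cubeGraph U).induce A).Connected ∧ ∀ x ∈ A, ∀ y ∈ A, dIn A x y = hDist x y

/-- `A` shatters the coordinate set `X`. -/
def Shatters [Fintype U] [DecidableEq U] (A : Set (U → Bool)) (X : Finset U) : Prop :=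
  ∀ g : U → Bool, ∃ a ∈ A, ∀ i ∈ X, a i = g i

/-- `A` strongly shatters `X`: it contains a full subcube over the coordinates `X`. -/
def StronglyShatters [Fintype U] [DecidableEq U] (A : Set (U → Bool)) (X : Finset U) : Prop :=
  ∃ a : U → Bool, ∀ g : U → Bool, (fun i => if i ∈ X then g i else a i) ∈ A

/-- An ample set family: every shattered set is strongly shattered. -/
def IsAmple [Fintype U] [DecidableEq U] (A : Set (U → Bool)) : Prop :=
  ∀ X : Finset U, Shatters A X → StronglyShatters A X

/-- Composition of sign vectors: `(X ∘ Y) e = X e` if `X e ≠ 0`, else `Y e`. -/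
def comp (X Y : U → SignType) : U → SignType := fun e => if X e = 0 then Y e else X e

/-- The support of a sign vector. -/
def supp (X : U → SignType) : Set U := {e | X e ≠ 0}

/-- The separator of two sign vectors. -/
def sep [Fintype U] [DecidableEq U] (X Y : U → SignType) : Finset U :=
  Finset.univ.filter fun e => X e * Y e = -1

/-- A complex of oriented matroids: face symmetry and strong elimination. -/
structure IsCOM (L : Set (U → SignType)) : Prop where
  fs : ∀ X ∈ L, ∀ Y ∈ L, comp X (-Y) ∈ L
  se : ∀ X ∈ L, ∀ Y ∈ L, ∀ e : U, X e * Y e = -1 →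
      ∃ Z ∈ L, Z e = 0 ∧ ∀ f : U, X f * Y f ≠ -1 → Z f = comp X Y f

/-- An oriented matroid: composition, strong elimination and symmetry. -/
structure IsOM (L : Set (U → SignType)) : Prop where
  c : ∀ X ∈ L, ∀ Y ∈ L, comp X Y ∈ L
  se : ∀ X ∈ L, ∀ Y ∈ L, ∀ e : U, X e * Y e = -1 →
      ∃ Z ∈ L, Z e = 0 ∧ ∀ f : U, X f * Y f ≠ -1 → Z f = comp X Y f
  sym : ∀ X ∈ L, -X ∈ L

/-- A simple system of sign vectors. -/
def SimpleSV (L : Set (U → SignType)) : Prop :=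
  (∀ e : U, ∀ s : SignType, ∃ X ∈ L, X e = s) ∧
  ∀ e f : U, e ≠ f → (∃ X ∈ L, X e * X f = 1) ∧ (∃ Y ∈ L, Y e * Y f = -1)

/-- The topes of a system of sign vectors: the covectors with full support. -/
def Topes (L : Set (U → SignType)) : Set (U → SignType) := {X ∈ L | ∀ e, X e ≠ 0}

/-- Conversion of a (full support) sign vector to a vertex of the hypercube. -/
def tb (X : U → SignType) : U → Bool := fun e => decide (X e = 1)

/-- The vertex set of the tope graph inside the hypercube. -/
def TopeSet (L : Set (U → SignType)) : Set (U → Bool) := tb '' Topes L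

/-- The face of a covector `X`. -/
def face (L : Set (U → SignType)) (X : U → SignType) : Set (U → SignType) :=
  {Z | ∃ Y ∈ L, Z = comp X Y}

/-- The topes of the face `F(X)`: the topes of `L` lying in the cube `C(X)`, i.e. agreeing
with `X` on the support of `X`. -/
def faceTopes (L : Set (U → SignType)) (X : U → SignType) : Set (U → SignType) :=
  {Z ∈ Topes L | ∀ e, X e ≠ 0 → Z e = X e}

/-- The distance between the faces `F(X)` and `F(Y)` in the tope graph. -/
noncomputable def faceDist [Fintype U] [DecidableEq U]
    (L : Set (U → SignType)) (X Y : U → SignType) : ℕ :=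
  sInf {n | ∃ A ∈ faceTopes L X, ∃ B ∈ faceTopes L Y, dIn (TopeSet L) (tb A) (tb B) = n}

/-!
The tope graph of a simple COM is a partial cube: for topes `T, T'` with `|S(T, T')| ≥ 2`
there is a tope `W ≠ T` whose separator from `T` is a proper part of `S(T, T')` (strong
elimination at some `e ∈ S(T, T')` gives a covector `Z` with `Z e = 0` agreeing with `T` off
`S(T, T')`, and composing `Z` with `T`, `-T` or a covector supplied by simplicity produces `W`),
so the distance between topes is `|S(T, T')|` by induction. For topes `A ∈ F(X)`, `B ∈ F(Y)` the
separator `S(A, B)` contains `S(X, Y)`, with equality for the pair `(X ∘ B, B)` exactly when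
`B ∈ F(Y ∘ X)`.
-/

namespace SignType

lemma mul_self_ne_neg_one (a : SignType) : a * a ≠ -1 := by
  revert a; decide

lemma ne_zero_of_mul_eq_neg_one {a b : SignType} : a * b = -1 → a ≠ 0 ∧ b ≠ 0 := by
  revert a b; decide

lemma mul_eq_neg_one_iff_ne {a b : SignType} : a ≠ 0 → b ≠ 0 → (a * b = -1 ↔ a ≠ b) := by
  revert a b; decide

lemma neg_ne_self_of_ne_zero {a : SignType} : a ≠ 0 → -a ≠ a := by
  revert a; decide

lemma decide_eq_one_ne_iff {a b : SignType} :
    a ≠ 0 → b ≠ 0 → ((decide (a = 1) ≠ decide (b = 1)) ↔ a ≠ b) := by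
  revert a b; decide

lemma eq_iff_ne_of_mul_eq_neg_mul {a b c d : SignType} :
    c ≠ 0 → d ≠ 0 → a * b = -(c * d) → (a = c ↔ b ≠ d) := by
  revert a b c d; decide

lemma ne_iff_of_ne_imp_ne {a b c : SignType} :
    a ≠ 0 → b ≠ 0 → c ≠ 0 → (a ≠ b → a ≠ c) → (b ≠ c ↔ a ≠ c ∧ a = b) := by
  revert a b c; decide

end SignType

@[simp]
lemma comp_apply_of_eq_zero {X : U → SignType} (Y : U → SignType) {e : U} (h : X e = 0) :
    comp X Y e = Y e := if_pos h

@[simp]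
lemma comp_apply_of_ne_zero {X : U → SignType} (Y : U → SignType) {e : U} (h : X e ≠ 0) :
    comp X Y e = X e := if_neg h

section SignVectors

variable [Fintype U] [DecidableEq U]

lemma mem_sep {X Y : U → SignType} {e : U} : e ∈ sep X Y ↔ X e * Y e = -1 := by
  simp [sep]

lemma mem_sep_iff_ne {X Y : U → SignType} {e : U} (hX : X e ≠ 0) (hY : Y e ≠ 0) :
    e ∈ sep X Y ↔ X e ≠ Y e :=
  mem_sep.trans (SignType.mul_eq_neg_one_iff_ne hX hY)

lemma eq_of_sep_eq_empty {A B : U → SignType} (hA : ∀ e, A e ≠ 0) (hB : ∀ e, B e ≠ 0)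
    (h : sep A B = ∅) : A = B := by
  funext e
  by_contra hne
  simpa [h] using (mem_sep_iff_ne (hA e) (hB e)).2 hne

lemma hDist_tb {A B : U → SignType} (hA : ∀ e, A e ≠ 0) (hB : ∀ e, B e ≠ 0) :
    hDist (tb A) (tb B) = #(sep A B) := by
  unfold hDist tb
  congr 1
  ext e
  simp only [mem_filter, mem_univ, true_and]
  rw [SignType.decide_eq_one_ne_iff (hA e) (hB e), mem_sep_iff_ne (hA e) (hB e)]

lemma card_sep_add_card_sep {T W T' : U → SignType} (hT : ∀ e, T e ≠ 0)
    (hW : ∀ e, W e ≠ 0) (hT' : ∀ e, T' e ≠ 0) (h : sep T W ⊆ sep T T') :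
    #(sep T W) + #(sep W T') = #(sep T T') := by
  have hsdiff : sep W T' = sep T T' \ sep T W := by
    ext e
    simp only [mem_sdiff, mem_sep_iff_ne (hT e) (hT' e), mem_sep_iff_ne (hT e) (hW e),
      mem_sep_iff_ne (hW e) (hT' e), not_not]
    refine SignType.ne_iff_of_ne_imp_ne (hT e) (hW e) (hT' e) fun hne => ?_
    rw [← mem_sep_iff_ne (hT e) (hT' e)]
    exact h ((mem_sep_iff_ne (hT e) (hW e)).2 hne)
  rw [hsdiff, card_sdiff_of_subset h, Nat.add_sub_cancel' (card_le_card h)]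

lemma sep_ssubset_of_apply_ne {T W : U → SignType} {S : Finset U} (hT : ∀ e, T e ≠ 0)
    (hW : ∀ e, W e ≠ 0) (hoff : ∀ e ∉ S, W e = T e) {a b : U} (ha : W a ≠ T a) (hb : b ∈ S)
    (hWb : W b = T b) : (sep T W).Nonempty ∧ sep T W ⊂ S := by
  have hsub : sep T W ⊆ S := fun e he => by
    by_contra hS
    exact (mem_sep_iff_ne (hT e) (hW e)).1 he (hoff e hS).symm
  refine ⟨⟨a, (mem_sep_iff_ne (hT a) (hW a)).2 (Ne.symm ha)⟩,
    (ssubset_iff_of_subset hsub).2 ⟨b, hb, ?_⟩⟩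
  rw [mem_sep_iff_ne (hT b) (hW b), hWb, not_not]

lemma sep_subset_sep_of_mem_faceTopes {L : Set (U → SignType)} {X Y A B : U → SignType}
    (hA : A ∈ faceTopes L X) (hB : B ∈ faceTopes L Y) : sep X Y ⊆ sep A B := by
  intro e he
  obtain ⟨hX, hY⟩ := SignType.ne_zero_of_mul_eq_neg_one (mem_sep.1 he)
  rwa [mem_sep, hA.2 e hX, hB.2 e hY, ← mem_sep]

end SignVectors

lemma dIn_comm [Fintype U] [DecidableEq U] (A : Set (U → Bool)) (x y : U → Bool) :
    dIn A x y = dIn A y x := by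
  unfold dIn
  by_cases h : x ∈ A ∧ y ∈ A
  · rw [dif_pos h, dif_pos h.symm, SimpleGraph.dist_comm]
  · rw [dif_neg h, dif_neg (mt And.symm h)]

lemma faceDist_comm [Fintype U] [DecidableEq U] (L : Set (U → SignType)) (X Y : U → SignType) :
    faceDist L X Y = faceDist L Y X := by
  unfold faceDist
  congr 1
  ext n
  constructor <;> rintro ⟨A, hA, B, hB, rfl⟩ <;> exact ⟨B, hB, A, hA, dIn_comm _ _ _⟩

lemma hDist_le_length [Fintype U] [DecidableEq U] {A : Set (U → Bool)} {x y : A}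
    (p : ((cubeGraph U).induce A).Walk x y) : hDist x.1 y.1 ≤ p.length := by
  induction p with
  | nil => simp [hDist]
  | @cons u v w huv _ ih =>
    calc hDist u.1 w.1 ≤ hDist u.1 v.1 + hDist v.1 w.1 := hammingDist_triangle _ _ _
      _ = 1 + hDist v.1 w.1 := by rw [show hDist u.1 v.1 = 1 from huv]
      _ ≤ _ := by rw [SimpleGraph.Walk.length_cons]; omega

variable {L : Set (U → SignType)}

lemma mem_Topes_comp {X R : U → SignType} (hmem : comp X R ∈ L) (hR : ∀ e, R e ≠ 0) :
    comp X R ∈ Topes L := by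
  refine ⟨hmem, fun e => ?_⟩
  by_cases hX : X e = 0
  · rw [comp_apply_of_eq_zero R hX]; exact hR e
  · rwa [comp_apply_of_ne_zero R hX]

lemma faceTopes_comp_subset (X Y : U → SignType) :
    faceTopes L (comp Y X) ⊆ faceTopes L Y := fun B hB =>
  ⟨hB.1, fun e he => by simpa [he] using hB.2 e (by simp [he])⟩

lemma mem_faceTopes_comp_of_sep_subset [Fintype U] [DecidableEq U] {X Y A B : U → SignType}
    (hA : A ∈ faceTopes L X) (hB : B ∈ faceTopes L Y) (h : sep A B ⊆ sep X Y) :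
    B ∈ faceTopes L (comp Y X) := by
  refine ⟨hB.1, fun e he => ?_⟩
  by_cases hY : Y e = 0
  · rw [comp_apply_of_eq_zero X hY] at he ⊢
    have hAB : e ∉ sep A B := fun hs => by simpa [hY] using mem_sep.1 (h hs)
    rw [mem_sep_iff_ne (hA.1.2 e) (hB.1.2 e), not_not] at hAB
    rw [← hAB, hA.2 e he]
  · rw [comp_apply_of_ne_zero X hY]; exact hB.2 e hY

lemma sep_comp_eq [Fintype U] [DecidableEq U] {X Y B : U → SignType}
    (hB : B ∈ faceTopes L (comp Y X)) : sep (comp X B) B = sep X Y := by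
  ext e
  rw [mem_sep, mem_sep]
  by_cases hX : X e = 0
  · simp [hX, SignType.mul_self_ne_neg_one]
  by_cases hY : Y e = 0
  · have hBe : B e = X e := by simpa [hY] using hB.2 e (by simp [hX, hY])
    simp [hX, hY, hBe, SignType.mul_self_ne_neg_one]
  · have hBe : B e = Y e := by simpa [hY] using hB.2 e (by simp [hY])
    simp [hX, hBe]

namespace SimpleSV

lemma exists_mem_eq_iff_ne (hs : SimpleSV L) {T : U → SignType} {e f : U} (hef : e ≠ f)
    (he : T e ≠ 0) (hf : T f ≠ 0) :
    ∃ V ∈ L, V e ≠ 0 ∧ V f ≠ 0 ∧ (V e = T e ↔ V f ≠ T f) := by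
  obtain ⟨⟨V₁, hV₁, h₁⟩, V₂, hV₂, h₂⟩ := hs.2 e f hef
  have hTef0 : T e * T f ≠ 0 := mul_ne_zero he hf
  obtain ⟨V, hV, hVef⟩ : ∃ V ∈ L, V e * V f = -(T e * T f) := by
    rcases hTef : T e * T f
    · exact absurd hTef hTef0
    · exact ⟨V₁, hV₁, h₁⟩
    · exact ⟨V₂, hV₂, h₂⟩
  have hVef0 : V e * V f ≠ 0 := by rw [hVef]; simpa using hTef0
  exact ⟨V, hV, left_ne_zero_of_mul hVef0, right_ne_zero_of_mul hVef0,
    SignType.eq_iff_ne_of_mul_eq_neg_mul he hf hVef⟩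

end SimpleSV

namespace IsCOM

lemma comp_mem (h : IsCOM L) {X Y : U → SignType} (hX : X ∈ L) (hY : Y ∈ L) :
    comp X Y ∈ L := by
  have hXY : comp X (-comp X (-Y)) = comp X Y := by
    funext e
    by_cases hXe : X e = 0 <;> simp [hXe]
  exact hXY ▸ h.fs X hX _ (h.fs X hX Y hY)

lemma comp_mem_faceTopes (h : IsCOM L) {X T : U → SignType} (hX : X ∈ L) (hT : T ∈ Topes L) :
    comp X T ∈ faceTopes L X :=
  ⟨mem_Topes_comp (h.comp_mem hX hT.1) hT.2, fun _ he => comp_apply_of_ne_zero T he⟩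

lemma topes_nonempty [Fintype U] (h : IsCOM L) (hs : SimpleSV L) (hL : L.Nonempty) :
    (Topes L).Nonempty := by
  suffices ∀ s : Finset U, ∃ T ∈ L, ∀ e ∈ s, T e ≠ 0 by
    obtain ⟨T, hT, hsupp⟩ := this univ
    exact ⟨T, hT, fun e => hsupp e (mem_univ e)⟩
  intro s
  induction s using Finset.induction_on with
  | empty => exact ⟨hL.some, hL.some_mem, by simp⟩
  | insert a s _ ih =>
    obtain ⟨T, hT, hsupp⟩ := ih
    obtain ⟨V, hV, hVa⟩ := hs.1 a 1
    refine ⟨comp T V, h.comp_mem hT hV, ?_⟩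
    intro e he
    by_cases hTe : T e = 0
    · obtain rfl : e = a := (mem_insert.1 he).resolve_right fun hes => hsupp e hes hTe
      simp [hTe, hVa]
    · rwa [comp_apply_of_ne_zero V hTe]

lemma exists_mem_faceTopes [Fintype U] (h : IsCOM L) (hs : SimpleSV L) {X : U → SignType}
    (hX : X ∈ L) :
    ∃ T, T ∈ faceTopes L X :=
  let ⟨T, hT⟩ := h.topes_nonempty hs ⟨X, hX⟩
  ⟨comp X T, h.comp_mem_faceTopes hX hT⟩

variable [Fintype U] [DecidableEq U]

lemma exists_tope_sep_ssubset (h : IsCOM L) (hs : SimpleSV L) {T T' : U → SignType}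
    (hT : T ∈ Topes L) (hT' : T' ∈ Topes L) (hcard : 1 < #(sep T T')) :
    ∃ W ∈ Topes L, (sep T W).Nonempty ∧ sep T W ⊂ sep T T' := by
  obtain ⟨e, he⟩ := card_pos.1 (zero_lt_one.trans hcard)
  obtain ⟨Z, hZ, hZe, hZcomp⟩ := h.se T hT.1 T' hT'.1 e (mem_sep.1 he)
  have hZoff : ∀ g ∉ sep T T', Z g = T g := fun g hg => by
    rw [hZcomp g (mt mem_sep.2 hg), comp_apply_of_ne_zero T' (hT.2 g)]
  have hoff : ∀ R, ∀ g ∉ sep T T', comp Z R g = T g := fun R g hg => by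
    rw [comp_apply_of_ne_zero R (by rw [hZoff g hg]; exact hT.2 g), hZoff g hg]
  by_cases hZT : ∃ f, Z f ≠ 0 ∧ Z f ≠ T f
  · obtain ⟨f, hf0, hfT⟩ := hZT
    have hW : comp Z T ∈ Topes L := mem_Topes_comp (h.comp_mem hZ hT.1) hT.2
    exact ⟨_, hW, sep_ssubset_of_apply_ne hT.2 hW.2 (hoff T) (a := f) (by simpa [hf0]) he
      (by simp [hZe])⟩
  push Not at hZT
  by_cases hZS : ∃ f ∈ sep T T', Z f ≠ 0
  · -- `Z` now agrees with `T` on its support, so `Z ∘ (-T)` flips `T` exactly where `Z = 0`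
    obtain ⟨f, hf, hf0⟩ := hZS
    have hW : comp Z (-T) ∈ Topes L :=
      mem_Topes_comp (h.fs Z hZ T hT.1) fun g => by simpa using hT.2 g
    exact ⟨_, hW, sep_ssubset_of_apply_ne hT.2 hW.2 (hoff _) (a := e)
      (by simpa [hZe] using SignType.neg_ne_self_of_ne_zero (hT.2 e)) hf
      (by simpa [hf0] using hZT f hf0)⟩
  · push Not at hZS
    obtain ⟨f, hf, hfe⟩ := exists_mem_ne hcard e
    obtain ⟨V, hV, hVe, hVf, hVeq⟩ := hs.exists_mem_eq_iff_ne (Ne.symm hfe) (hT.2 e) (hT.2 f)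
    have hW : comp Z (comp V T) ∈ Topes L :=
      mem_Topes_comp (h.comp_mem hZ (h.comp_mem hV hT.1)) (mem_Topes_comp
        (h.comp_mem hV hT.1) hT.2).2
    -- `Z` vanishes on `S(T, T')`, where `Z ∘ V ∘ T` is `V`: it agrees with `T` at exactly one
    -- of `e`, `f`
    have hWS : ∀ g ∈ sep T T', V g ≠ 0 → comp Z (comp V T) g = V g := fun g hg hVg => by
      simp [hZS g hg, hVg]
    by_cases hVT : V e = T e
    · exact ⟨_, hW, sep_ssubset_of_apply_ne hT.2 hW.2 (hoff _) (a := f)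
        (by rw [hWS f hf hVf]; exact hVeq.1 hVT) he (by rw [hWS e he hVe, hVT])⟩
    · exact ⟨_, hW, sep_ssubset_of_apply_ne hT.2 hW.2 (hoff _) (a := e)
        (by rwa [hWS e he hVe]) hf
        (by rw [hWS f hf hVf]; by_contra hne; exact hVT (hVeq.2 hne))⟩

lemma exists_walk_length_le (h : IsCOM L) (hs : SimpleSV L) {T T' : U → SignType}
    (hT : T ∈ Topes L) (hT' : T' ∈ Topes L) :
    ∃ p : ((cubeGraph U).induce (TopeSet L)).Walk ⟨tb T, T, hT, rfl⟩ ⟨tb T', T', hT', rfl⟩,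
      p.length ≤ #(sep T T') := by
  induction hn : #(sep T T') using Nat.strong_induction_on generalizing T T' with
  | _ n ih =>
  rcases lt_trichotomy n 1 with hn0 | rfl | hn2
  · obtain rfl := eq_of_sep_eq_empty hT.2 hT'.2 (card_eq_zero.1 (by omega))
    exact ⟨.nil, by simp⟩
  · have hadj : ((cubeGraph U).induce (TopeSet L)).Adj ⟨tb T, T, hT, rfl⟩ ⟨tb T', T', hT', rfl⟩ :=
      show hDist (tb T) (tb T') = 1 by rw [hDist_tb hT.2 hT'.2, hn]
    exact ⟨hadj.toWalk, by simp⟩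
  · obtain ⟨W, hW, hne, hss⟩ := h.exists_tope_sep_ssubset hs hT hT' (hn ▸ hn2)
    have hsum := card_sep_add_card_sep hT.2 hW.2 hT'.2 hss.subset
    obtain ⟨p, hp⟩ := ih _ (hn ▸ card_lt_card hss) hT hW rfl
    obtain ⟨q, hq⟩ := ih _ (by have := hne.card_pos; omega) hW hT' rfl
    exact ⟨p.append q, by rw [SimpleGraph.Walk.length_append]; omega⟩

theorem dIn_tb_eq_card_sep (h : IsCOM L) (hs : SimpleSV L) {A B : U → SignType}
    (hA : A ∈ Topes L) (hB : B ∈ Topes L) : dIn (TopeSet L) (tb A) (tb B) = #(sep A B) := by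
  rw [dIn, dif_pos ⟨⟨A, hA, rfl⟩, ⟨B, hB, rfl⟩⟩]
  obtain ⟨p, hp⟩ := h.exists_walk_length_le hs hA hB
  obtain ⟨q, hq⟩ := (SimpleGraph.Walk.reachable p).exists_walk_length_eq_dist
  refine le_antisymm ((SimpleGraph.dist_le p).trans hp) ?_
  rw [← hq, ← hDist_tb hA.2 hB.2]
  exact hDist_le_length q

theorem faceDist_eq_card_sep (h : IsCOM L) (hs : SimpleSV L) {X Y : U → SignType}
    (hX : X ∈ L) (hY : Y ∈ L) : faceDist L X Y = #(sep X Y) := by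
  refine IsLeast.csInf_eq ⟨?_, ?_⟩
  · obtain ⟨B, hB⟩ := h.exists_mem_faceTopes hs (h.comp_mem hY hX)
    have hA := h.comp_mem_faceTopes hX hB.1
    exact ⟨_, hA, B, faceTopes_comp_subset X Y hB,
      by rw [h.dIn_tb_eq_card_sep hs hA.1 hB.1, sep_comp_eq hB]⟩
  · rintro n ⟨A, hA, B, hB, rfl⟩
    rw [h.dIn_tb_eq_card_sep hs hA.1 hB.1]
    exact card_le_card (sep_subset_sep_of_mem_faceTopes hA hB)

theorem mem_faceTopes_comp_iff (h : IsCOM L) (hs : SimpleSV L) {X Y B : U → SignType}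
    (hX : X ∈ L) (hY : Y ∈ L) :
    (B ∈ faceTopes L Y ∧ ∃ A ∈ faceTopes L X,
        dIn (TopeSet L) (tb A) (tb B) = faceDist L X Y) ↔ B ∈ faceTopes L (comp Y X) := by
  rw [h.faceDist_eq_card_sep hs hX hY]
  constructor
  · rintro ⟨hBY, A, hA, hd⟩
    rw [h.dIn_tb_eq_card_sep hs hA.1 hBY.1] at hd
    exact mem_faceTopes_comp_of_sep_subset hA hBY
      (eq_of_subset_of_card_le (sep_subset_sep_of_mem_faceTopes hA hBY) hd.le).ge
  · intro hB
    have hA := h.comp_mem_faceTopes hX hB.1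
    exact ⟨faceTopes_comp_subset X Y hB, _, hA,
      by rw [h.dIn_tb_eq_card_sep hs hA.1 hB.1, sep_comp_eq hB]⟩

end IsCOM

theorem stmt12_general [Fintype U] [DecidableEq U] (L : Set (U → SignType))
    (hcom : IsCOM L) (hsimple : SimpleSV L)
    (X : U → SignType) (hX : X ∈ L) (Y : U → SignType) (hY : Y ∈ L) :
    faceDist L X Y = (sep X Y).card ∧
    (∀ B ∈ Topes L,
      ((B ∈ faceTopes L Y ∧ ∃ A ∈ faceTopes L X,
          dIn (TopeSet L) (tb A) (tb B) = faceDist L X Y) ↔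
        B ∈ faceTopes L (comp Y X))) ∧
    (∀ A ∈ Topes L,
      ((A ∈ faceTopes L X ∧ ∃ B ∈ faceTopes L Y,
          dIn (TopeSet L) (tb A) (tb B) = faceDist L X Y) ↔
        A ∈ faceTopes L (comp X Y))) := by
  refine ⟨hcom.faceDist_eq_card_sep hsimple hX hY,
    fun _ _ => hcom.mem_faceTopes_comp_iff hsimple hX hY, fun A _ => ?_⟩
  rw [faceDist_comm]
  simpa only [dIn_comm _ _ (tb A)] using hcom.mem_faceTopes_comp_iff hsimple (B := A) hY hX

/-- In a (simple) COM, (i) the distance between the faces `F(X)` and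
`F(Y)` in the tope graph equals `|S(X,Y)|`; (ii) the metric projection of `F(X)` onto
`F(Y)` is the face `F(Y∘X)`, and the metric projection of `F(Y)` onto `F(X)` is
`F(X∘Y)`. -/
theorem stmt12 [Fintype U] [DecidableEq U] (L : Set (U → SignType))
    (hcom : IsCOM L) (hsimple : SimpleSV L) (hne : L.Nonempty)
    (X : U → SignType) (hX : X ∈ L) (Y : U → SignType) (hY : Y ∈ L) :
    faceDist L X Y = (sep X Y).card ∧
    (∀ B ∈ Topes L,
      ((B ∈ faceTopes L Y ∧ ∃ A ∈ faceTopes L X,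
          dIn (TopeSet L) (tb A) (tb B) = faceDist L X Y) ↔
        B ∈ faceTopes L (comp Y X))) ∧
    (∀ A ∈ Topes L,
      ((A ∈ faceTopes L X ∧ ∃ B ∈ faceTopes L Y,
          dIn (TopeSet L) (tb A) (tb B) = faceDist L X Y) ↔
        A ∈ faceTopes L (comp X Y))) :=
  stmt12_general L hcom hsimple X hX Y hY
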